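/- arXiv:2007.12840 — 2 statements merged into one kernel-verified Lean document; each statement's English description precedes it below -/
import Mathlib

section
/- Let w = h + conj(g) be a sense-preserving harmonic mapping of 𝔻 with w(𝔻) ⊆ 𝔻, where h and g both have zeros of order at least p ≥ 1 at 0 (with w having a zero of order exactly p at 0). Then for every z ∈ 𝔻, |w(z)| ≤ (4/π) arctan[ |z|^p · (|z| + (π/4)(|a_p| + |b_p|)) / (1 + (π/4)(|a_p| + |b_p|)|z|) ], where a_p = h^{(p)}(0)/p! and b_p = g^{(p)}(0)/p!. -/
/-!
Rotate so that `‖w z‖ = re (conj e * w z)` with `‖e‖ = 1`. Then `‖w z‖ = re (F z)` for the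
holomorphic function `F = conj e * h + e * g`, which maps the disc into the strip `|re| < 1` and
vanishes to order `p` at `0`. The map `ζ ↦ tan (π ζ / 4)` sends this strip into the unit disc and
is tangent to `ζ ↦ π ζ / 4` at `0`, so `tan (π F / 4) = z ^ p * ψ` with `ψ` a self-map of the
closed disc and `ψ 0 = (π / 4) * F⁽ᵖ⁾(0) / p!`. The Schwarz–Pick lemma bounds `‖ψ z‖` by
`(‖z‖ + ‖ψ 0‖) / (1 + ‖ψ 0‖ * ‖z‖)`, and `|re ζ| ≤ arctan ‖tan ζ‖` on the strip `|re ζ| < π / 4`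
converts this back into a bound for `re (F z)`.
-/

open Complex Metric Real

open Function Filter Topology ComplexConjugate Set

section IteratedSlope

variable {𝕜 E : Type*} [NontriviallyNormedField 𝕜] [CharZero 𝕜] [NormedAddCommGroup E]
  [NormedSpace 𝕜 E] [CompleteSpace E] {f : 𝕜 → E} {z₀ : 𝕜}

theorem HasFPowerSeriesAt.coeff_eq_inv_factorial_smul_iteratedDeriv
    {q : FormalMultilinearSeries 𝕜 𝕜 E} (hq : HasFPowerSeriesAt f q z₀) (n : ℕ) :
    q.coeff n = (n.factorial : 𝕜)⁻¹ • iteratedDeriv n f z₀ := by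
  obtain ⟨r, hr⟩ := hq
  rw [iteratedDeriv_eq_iteratedFDeriv, ← hr.factorial_smul, ← Nat.cast_smul_eq_nsmul 𝕜, smul_smul,
    inv_mul_cancel₀ (by exact_mod_cast n.factorial_ne_zero), one_smul]
  rfl

theorem AnalyticAt.iterate_dslope_apply_self (hf : AnalyticAt 𝕜 f z₀) (n : ℕ) :
    (swap dslope z₀)^[n] f z₀ = (n.factorial : 𝕜)⁻¹ • iteratedDeriv n f z₀ := by
  obtain ⟨q, hq⟩ := hf
  rw [← hq.coeff_eq_inv_factorial_smul_iteratedDeriv, ← zero_add n,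
    ← FormalMultilinearSeries.coeff_iterate_fslope, FormalMultilinearSeries.coeff,
    (hq.has_fpower_series_iterate_dslope_fslope n).coeff_zero, zero_add]

theorem AnalyticAt.pow_sub_smul_iterate_dslope (hf : AnalyticAt 𝕜 f z₀) {n : ℕ}
    (hn : ∀ k < n, iteratedDeriv k f z₀ = 0) (z : 𝕜) :
    (z - z₀) ^ n • (swap dslope z₀)^[n] f z = f z :=
  pow_sub_smul_iterate_dslope_of_zero n
    (fun k hk => by rw [hf.iterate_dslope_apply_self, hn k hk, smul_zero]) z

end IteratedSlope

section DifferentiableOn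

variable {E : Type*} [NormedAddCommGroup E] [NormedSpace ℂ E] [CompleteSpace E] {f : ℂ → E}
  {s : Set ℂ} {c : ℂ}

theorem DifferentiableOn.iterate_dslope (hf : DifferentiableOn ℂ f s) (hs : s ∈ 𝓝 c) (n : ℕ) :
    DifferentiableOn ℂ ((swap dslope c)^[n] f) s := by
  induction n with
  | zero => exact hf
  | succ n ih => rw [iterate_succ_apply']; exact (differentiableOn_dslope hs).2 ih

theorem DifferentiableOn.exists_pow_sub_smul_eq (hf : DifferentiableOn ℂ f s) (hs : s ∈ 𝓝 c)
    {n : ℕ} (hn : ∀ k < n, iteratedDeriv k f c = 0) :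
    ∃ φ : ℂ → E, DifferentiableOn ℂ φ s ∧ (∀ z, (z - c) ^ n • φ z = f z) ∧
      φ c = (n.factorial : ℂ)⁻¹ • iteratedDeriv n f c :=
  ⟨_, hf.iterate_dslope hs n, (hf.analyticAt hs).pow_sub_smul_iterate_dslope hn,
    (hf.analyticAt hs).iterate_dslope_apply_self n⟩

end DifferentiableOn

theorem Real.sin_sq_lt_cos_sq {x : ℝ} (h : |x| < π / 4) : sin x ^ 2 < cos x ^ 2 := by
  have : 0 < cos (2 * x) :=
    cos_pos_of_mem_Ioo (by constructor <;> linarith [abs_lt.1 h])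
  linarith [cos_two_mul x, sin_sq_add_cos_sq x]

namespace Complex

theorem sq_norm_sin (ζ : ℂ) : ‖sin ζ‖ ^ 2 = Real.sin ζ.re ^ 2 + Real.sinh ζ.im ^ 2 := by
  conv_lhs => rw [← re_add_im ζ]
  rw [sin_add_mul_I, ← ofReal_sin, ← ofReal_cos, ← ofReal_sinh, ← ofReal_cosh, Complex.sq_norm,
    ← ofReal_mul, ← ofReal_mul, normSq_add_mul_I]
  nlinarith [Real.sin_sq_add_cos_sq ζ.re, Real.cosh_sq ζ.im]

theorem sq_norm_cos (ζ : ℂ) : ‖cos ζ‖ ^ 2 = Real.cos ζ.re ^ 2 + Real.sinh ζ.im ^ 2 := by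
  conv_lhs => rw [← re_add_im ζ]
  rw [cos_add_mul_I, ← ofReal_sin, ← ofReal_cos, ← ofReal_sinh, ← ofReal_cosh, Complex.sq_norm,
    ← ofReal_mul, ← ofReal_mul, sub_eq_add_neg, ← neg_mul, ← ofReal_neg, normSq_add_mul_I]
  nlinarith [Real.sin_sq_add_cos_sq ζ.re, Real.cosh_sq ζ.im]

theorem cos_ne_zero_of_abs_re_lt {ζ : ℂ} (h : |ζ.re| < π / 2) : cos ζ ≠ 0 := by
  have hcos : 0 < Real.cos ζ.re := Real.cos_pos_of_mem_Ioo (abs_lt.1 h)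
  intro h0
  have := sq_norm_cos ζ
  rw [h0, norm_zero] at this
  nlinarith [sq_nonneg (Real.sinh ζ.im)]

theorem norm_tan_lt_one {ζ : ℂ} (h : |ζ.re| < π / 4) : ‖tan ζ‖ < 1 := by
  have hsc : ‖sin ζ‖ ^ 2 < ‖cos ζ‖ ^ 2 := by
    rw [sq_norm_sin, sq_norm_cos]; linarith [Real.sin_sq_lt_cos_sq h]
  have hsc' := lt_of_pow_lt_pow_left₀ 2 (norm_nonneg _) hsc
  rw [tan_eq_sin_div_cos, norm_div, div_lt_one ((norm_nonneg _).trans_lt hsc')]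
  exact hsc'

theorem abs_tan_re_le_norm_tan {ζ : ℂ} (h : |ζ.re| < π / 4) : |Real.tan ζ.re| ≤ ‖tan ζ‖ := by
  have hcos : 0 < Real.cos ζ.re :=
    Real.cos_pos_of_mem_Ioo (by constructor <;> linarith [abs_lt.1 h])
  have hsc := Real.sin_sq_lt_cos_sq h
  rw [← sq_le_sq₀ (abs_nonneg _) (norm_nonneg _), sq_abs, tan_eq_sin_div_cos, norm_div, div_pow,
    Real.tan_eq_sin_div_cos, div_pow, sq_norm_sin, sq_norm_cos,
    div_le_div_iff₀ (by positivity) (by positivity)]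
  nlinarith [sq_nonneg (Real.sinh ζ.im)]

theorem abs_re_le_arctan_norm_tan {ζ : ℂ} (h : |ζ.re| < π / 4) :
    |ζ.re| ≤ Real.arctan ‖tan ζ‖ := by
  have hmono := Real.arctan_strictMono.monotone (abs_tan_re_le_norm_tan h)
  have hx : Real.arctan (Real.tan ζ.re) = ζ.re :=
    Real.arctan_tan (by linarith [abs_lt.1 h, pi_pos]) (by linarith [abs_lt.1 h, pi_pos])
  have hle := Real.arctan_strictMono.monotone (le_abs_self (Real.tan ζ.re))
  have hge := Real.arctan_strictMono.monotone (neg_abs_le (Real.tan ζ.re))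
  rw [Real.arctan_neg, hx] at hge
  rw [hx] at hle
  exact abs_le.2 ⟨by linarith, by linarith⟩

theorem sq_norm_one_sub_conj_mul_sub_sq_norm_sub (a u : ℂ) :
    ‖1 - conj a * u‖ ^ 2 - ‖u - a‖ ^ 2 = (1 - ‖a‖ ^ 2) * (1 - ‖u‖ ^ 2) := by
  simp only [Complex.sq_norm, normSq_apply, sub_re, sub_im, mul_re, mul_im, conj_re, conj_im,
    one_re, one_im]
  ring

theorem norm_sub_div_one_sub_conj_mul_le_one {a u : ℂ} (ha : ‖a‖ < 1) (hu : ‖u‖ ≤ 1) :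
    ‖(u - a) / (1 - conj a * u)‖ ≤ 1 := by
  have key := sq_norm_one_sub_conj_mul_sub_sq_norm_sub a u
  have hsq : ‖u - a‖ ^ 2 ≤ ‖1 - conj a * u‖ ^ 2 := by
    have : 0 ≤ (1 - ‖a‖ ^ 2) * (1 - ‖u‖ ^ 2) :=
      mul_nonneg (by nlinarith [norm_nonneg a]) (by nlinarith [norm_nonneg u])
    linarith
  rw [norm_div]
  exact div_le_one_of_le₀
    ((pow_le_pow_iff_left₀ (norm_nonneg _) (norm_nonneg _) two_ne_zero).1 hsq) (norm_nonneg _)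

theorem norm_add_div_one_add_conj_mul_le {a v : ℂ} {s : ℝ} (ha : ‖a‖ ≤ 1) (hv : ‖v‖ ≤ s)
    (hs : s ≤ 1) : ‖(v + a) / (1 + conj a * v)‖ ≤ (s + ‖a‖) / (1 + ‖a‖ * s) := by
  have key := sq_norm_one_sub_conj_mul_sub_sq_norm_sub (-a) v
  rw [map_neg, neg_mul, sub_neg_eq_add, sub_neg_eq_add, norm_neg] at key
  have hY : ‖1 + conj a * v‖ ≤ 1 + ‖a‖ * s := by
    calc ‖1 + conj a * v‖ ≤ 1 + ‖a‖ * ‖v‖ := by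
          simpa only [norm_one, norm_mul, norm_conj] using norm_add_le (1 : ℂ) (conj a * v)
      _ ≤ 1 + ‖a‖ * s := by gcongr
  have hr := norm_nonneg v
  have ht := norm_nonneg a
  have hs0 : 0 ≤ s := hr.trans hv
  have hsq : (‖v + a‖ * (1 + ‖a‖ * s)) ^ 2 ≤ ((s + ‖a‖) * ‖1 + conj a * v‖) ^ 2 := by
    have h₁ : 0 ≤ (1 - ‖a‖ ^ 2) * (s ^ 2 - ‖v‖ ^ 2) * (1 + ‖a‖ * s) ^ 2 :=
      mul_nonneg (mul_nonneg (by nlinarith) (by nlinarith)) (sq_nonneg _)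
    have h₂ : 0 ≤ (1 - ‖a‖ ^ 2) * (1 - s ^ 2) * ((1 + ‖a‖ * s) ^ 2 - ‖1 + conj a * v‖ ^ 2) :=
      mul_nonneg (mul_nonneg (by nlinarith) (by nlinarith))
        (sub_nonneg.2 (pow_le_pow_left₀ (norm_nonneg _) hY 2))
    rw [mul_pow, mul_pow, show ‖v + a‖ ^ 2 = ‖1 + conj a * v‖ ^ 2 - (1 - ‖a‖ ^ 2) * (1 - ‖v‖ ^ 2)
      by linarith]
    linarith
  rw [norm_div]
  rcases (norm_nonneg (1 + conj a * v)).eq_or_lt with h0 | hpos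
  · rw [← h0, div_zero]; positivity
  · rw [div_le_div_iff₀ hpos (by positivity)]
    exact (pow_le_pow_iff_left₀ (by positivity) (by positivity) two_ne_zero).1 hsq

theorem norm_le_add_div_one_add_mul_of_mapsTo_ball {f : ℂ → ℂ}
    (hd : DifferentiableOn ℂ f (ball 0 1)) (hmaps : MapsTo f (ball 0 1) (closedBall 0 1)) {z : ℂ}
    (hz : z ∈ ball 0 1) : ‖f z‖ ≤ (‖z‖ + ‖f 0‖) / (1 + ‖f 0‖ * ‖z‖) := by
  have hz1 : ‖z‖ < 1 := mem_ball_zero_iff.1 hz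
  have hf1 : ∀ ζ ∈ ball (0 : ℂ) 1, ‖f ζ‖ ≤ 1 := fun ζ hζ => mem_closedBall_zero_iff.1 (hmaps hζ)
  set a := f 0
  rcases (hf1 0 (mem_ball_self one_pos)).lt_or_eq with ha | ha
  swap
  · rw [ha, one_mul, add_comm, div_self (by positivity)]
    exact hf1 z hz
  have hden : ∀ ζ ∈ ball (0 : ℂ) 1, 1 - conj a * f ζ ≠ 0 := by
    intro ζ hζ h0
    have : ‖conj a * f ζ‖ < 1 := by
      rw [norm_mul, norm_conj]
      nlinarith [norm_nonneg a, norm_nonneg (f ζ), hf1 ζ hζ]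
    rw [← sub_eq_zero.1 h0, norm_one] at this
    exact this.false
  -- the Möbius automorphism moving `a` to `0` reduces to the classical Schwarz lemma
  set χ := fun ζ => (f ζ - a) / (1 - conj a * f ζ)
  have hχd : DifferentiableOn ℂ χ (ball 0 1) :=
    (hd.sub_const a).div ((differentiableOn_const 1).sub (hd.const_mul _)) hden
  have hχmaps : MapsTo χ (ball 0 1) (closedBall 0 1) := fun ζ hζ =>
    mem_closedBall_zero_iff.2 (norm_sub_div_one_sub_conj_mul_le_one ha (hf1 ζ hζ))
  have hχz : ‖χ z‖ ≤ ‖z‖ := norm_le_norm_of_mapsTo_ball hχd hχmaps (by simp [χ, a]) hz1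
  have hfz : f z = (χ z + a) / (1 + conj a * χ z) := by
    have haa : 1 - conj a * a ≠ 0 := by
      rw [← normSq_eq_conj_mul_self, normSq_eq_norm_sq]
      exact_mod_cast (by nlinarith [norm_nonneg a] : (1 : ℝ) - ‖a‖ ^ 2 ≠ 0)
    have hD := hden z hz
    have hnum : χ z + a = f z * (1 - conj a * a) / (1 - conj a * f z) := by
      rw [div_add' _ _ _ hD]; ring
    have hdenom : 1 + conj a * χ z = (1 - conj a * a) / (1 - conj a * f z) := by
      rw [mul_div_assoc', one_add_div hD]; ring
    rw [hnum, hdenom, div_div_div_cancel_right₀ hD, mul_div_cancel_right₀ _ haa]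
  rw [hfz]
  exact norm_add_div_one_add_conj_mul_le ha.le hχz hz1.le

theorem norm_le_one_of_norm_pow_smul_le_one {E : Type*} [NormedAddCommGroup E] [NormedSpace ℂ E]
    {f : ℂ → E} (hd : DifferentiableOn ℂ f (ball 0 1)) {n : ℕ}
    (hb : ∀ ζ ∈ ball (0 : ℂ) 1, ‖ζ ^ n • f ζ‖ ≤ 1) {z : ℂ} (hz : z ∈ ball 0 1) : ‖f z‖ ≤ 1 := by
  have hz1 : ‖z‖ < 1 := mem_ball_zero_iff.1 hz
  have hr : ∀ r ∈ Ioo ‖z‖ 1, ‖f z‖ ≤ (r ^ n)⁻¹ := by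
    rintro r ⟨hzr, hr1⟩
    have hr0 : 0 < r := (norm_nonneg z).trans_lt hzr
    refine norm_le_of_forall_mem_frontier_norm_le isBounded_ball
      (hd.diffContOnCl_ball (closedBall_subset_ball hr1)) (fun ζ hζ => ?_)
      (subset_closure (mem_ball_zero_iff.2 hzr))
    rw [frontier_ball 0 hr0.ne', mem_sphere_zero_iff_norm] at hζ
    have := hb ζ (mem_ball_zero_iff.2 (hζ.trans_lt hr1))
    rw [norm_smul, norm_pow, hζ] at this
    rwa [← one_div, le_div_iff₀' (by positivity)]
  have hlim : Tendsto (fun r : ℝ => (r ^ n)⁻¹) (𝓝[<] 1) (𝓝 1) := by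
    have hc : ContinuousAt (fun r : ℝ => (r ^ n)⁻¹) 1 := (continuousAt_id.pow n).inv₀ (by simp)
    simpa using tendsto_nhdsWithin_of_tendsto_nhds hc.tendsto
  exact ge_of_tendsto hlim (eventually_of_mem (Ioo_mem_nhdsLT hz1) hr)

theorem differentiableOn_dslope_tan :
    DifferentiableOn ℂ (dslope tan 0) {w : ℂ | |w.re| < π / 2} := by
  have hopen : IsOpen {w : ℂ | |w.re| < π / 2} := isOpen_lt (by fun_prop) continuous_const
  refine (differentiableOn_dslope (hopen.mem_nhds (by simpa using pi_pos))).2 fun w hw =>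
    (differentiableAt_tan.2 ?_).differentiableWithinAt
  exact cos_ne_zero_of_abs_re_lt hw

theorem abs_re_le_of_abs_re_lt_one {φ : ℂ → ℂ} (hd : DifferentiableOn ℂ φ (ball 0 1)) {n : ℕ}
    (hn : n ≠ 0) (hre : ∀ ζ ∈ ball (0 : ℂ) 1, |(ζ ^ n * φ ζ).re| < 1) {z : ℂ}
    (hz : z ∈ ball 0 1) :
    |(z ^ n * φ z).re| ≤
      4 / π * Real.arctan (‖z‖ ^ n * ((‖z‖ + π / 4 * ‖φ 0‖) / (1 + π / 4 * ‖φ 0‖ * ‖z‖))) := by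
  have hπ : 0 < π / 4 := by positivity
  set F := fun ζ : ℂ => ((π / 4 : ℝ) : ℂ) * (ζ ^ n * φ ζ)
  have hFre : ∀ ζ, |(F ζ).re| = π / 4 * |(ζ ^ n * φ ζ).re| := fun ζ => by
    simp only [F, re_ofReal_mul, abs_mul, abs_of_pos hπ]
  have hstrip : ∀ ζ ∈ ball (0 : ℂ) 1, |(F ζ).re| < π / 4 := fun ζ hζ => by
    rw [hFre]; nlinarith [hre ζ hζ]
  set ψ := fun ζ : ℂ => ((π / 4 : ℝ) : ℂ) * φ ζ * dslope tan 0 (F ζ)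
  have htan : ∀ ζ, tan (F ζ) = ζ ^ n * ψ ζ := fun ζ => by
    rw [← sub_smul_dslope_of_zero tan_zero (F ζ)]
    simp only [F, ψ, sub_zero, smul_eq_mul]
    ring
  have hψd : DifferentiableOn ℂ ψ (ball 0 1) :=
    ((differentiableOn_const _).mul hd).mul (differentiableOn_dslope_tan.comp
      ((differentiableOn_const _).mul ((differentiableOn_id.pow n).mul hd))
      fun ζ hζ => (hstrip ζ hζ).trans (by linarith))
  have hψ0 : ‖ψ 0‖ = π / 4 * ‖φ 0‖ := by
    simp [ψ, F, zero_pow hn, dslope_same, deriv_tan, pi_pos.le]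
  have hψ1 : MapsTo ψ (ball 0 1) (closedBall 0 1) := fun ζ hζ =>
    mem_closedBall_zero_iff.2 (norm_le_one_of_norm_pow_smul_le_one hψd
      (fun ξ hξ => by rw [smul_eq_mul, ← htan]; exact (norm_tan_lt_one (hstrip ξ hξ)).le) hζ)
  have hψz := norm_le_add_div_one_add_mul_of_mapsTo_ball hψd hψ1 hz
  rw [hψ0] at hψz
  calc |(z ^ n * φ z).re| = 4 / π * |(F z).re| := by
        rw [hFre]; field_simp
    _ ≤ 4 / π * Real.arctan ‖tan (F z)‖ := by
        gcongr; exact abs_re_le_arctan_norm_tan (hstrip z hz)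
    _ ≤ _ := by
        rw [htan, norm_mul, norm_pow]
        gcongr

theorem re_conj_mul_add_mul (e a b : ℂ) :
    (conj e * a + e * b).re = (conj e * (a + conj b)).re := by
  simp only [add_re, mul_re, mul_add, conj_re, conj_im]
  ring

theorem exists_norm_eq_one_norm_eq_re_conj_mul (w : ℂ) :
    ∃ e : ℂ, ‖e‖ = 1 ∧ ‖w‖ = (conj e * w).re := by
  have key : conj (exp (arg w * I)) * (‖w‖ * exp (arg w * I)) = ‖w‖ := by
    rw [mul_left_comm, conj_mul', norm_exp_ofReal_mul_I]
    simp
  rw [norm_mul_exp_arg_mul_I] at key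
  exact ⟨_, norm_exp_ofReal_mul_I _, by rw [key, ofReal_re]⟩

end Complex

theorem add_div_one_add_mul_le_add_div_one_add_mul {s t c : ℝ} (hs : 0 ≤ s) (hs1 : s ≤ 1)
    (ht : 0 ≤ t) (htc : t ≤ c) : (s + t) / (1 + t * s) ≤ (s + c) / (1 + c * s) := by
  rw [div_le_div_iff₀ (by positivity) (by nlinarith)]
  nlinarith [mul_nonneg (sub_nonneg.2 htc) (by nlinarith : (0 : ℝ) ≤ 1 - s ^ 2)]

theorem improved_harmonic_schwarz_general
    (h g : ℂ → ℂ) (p : ℕ) (hp : 1 ≤ p)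
    (hh : DifferentiableOn ℂ h (ball (0:ℂ) 1))
    (hg : DifferentiableOn ℂ g (ball (0:ℂ) 1))
    (hmaps : ∀ z ∈ ball (0:ℂ) 1, ‖h z + (starRingEnd ℂ) (g z)‖ < 1)
    (hzero : ∀ k < p, iteratedDeriv k h 0 = 0 ∧ iteratedDeriv k g 0 = 0) :
    ∀ z ∈ ball (0:ℂ) 1,
      ‖h z + (starRingEnd ℂ) (g z)‖ ≤
        (4 / π) * Real.arctan ((‖z‖) ^ p *
          ((‖z‖ + (π / 4) *
              (‖iteratedDeriv p h 0‖ / (p.factorial : ℝ) +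
               ‖iteratedDeriv p g 0‖ / (p.factorial : ℝ))) /
            (1 + (π / 4) *
              (‖iteratedDeriv p h 0‖ / (p.factorial : ℝ) +
               ‖iteratedDeriv p g 0‖ / (p.factorial : ℝ)) * ‖z‖))) := by
  intro z hz
  have hball := ball_mem_nhds (0 : ℂ) one_pos
  obtain ⟨φh, hφhd, hφh, hφh0⟩ := hh.exists_pow_sub_smul_eq hball fun k hk => (hzero k hk).1
  obtain ⟨φg, hφgd, hφg, hφg0⟩ := hg.exists_pow_sub_smul_eq hball fun k hk => (hzero k hk).2
  obtain ⟨e, he, hwz⟩ := exists_norm_eq_one_norm_eq_re_conj_mul (h z + conj (g z))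
  have hre : ∀ ζ, (ζ ^ p * (conj e * φh ζ + e * φg ζ)).re = (conj e * (h ζ + conj (g ζ))).re :=
    fun ζ => by
      rw [← re_conj_mul_add_mul, ← hφh ζ, ← hφg ζ]
      simp only [sub_zero, smul_eq_mul]
      congr 1
      ring
  have hφ0 : ‖conj e * φh 0 + e * φg 0‖ ≤
      ‖iteratedDeriv p h 0‖ / p.factorial + ‖iteratedDeriv p g 0‖ / p.factorial := by
    refine (norm_add_le _ _).trans_eq ?_
    simp [hφh0, hφg0, he, div_eq_inv_mul]
  have hs := mem_ball_zero_iff.1 hz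
  calc ‖h z + conj (g z)‖ ≤ |(z ^ p * (conj e * φh z + e * φg z)).re| := by
        rw [hre, hwz]; exact le_abs_self _
    _ ≤ _ := abs_re_le_of_abs_re_lt_one (φ := fun ζ => conj e * φh ζ + e * φg ζ)
        ((hφhd.const_mul _).add (hφgd.const_mul _))
        (by omega) (fun ζ hζ => by
          rw [hre]
          refine (abs_re_le_norm _).trans_lt ?_
          rw [norm_mul, norm_conj, he, one_mul]
          exact hmaps ζ hζ) hz
    _ ≤ _ := by
        gcongr 4 / π * Real.arctan (_ * ?_)
        exact add_div_one_add_mul_le_add_div_one_add_mul (norm_nonneg z) hs.le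
          (by positivity) (by gcongr)

theorem improved_harmonic_schwarz
    (h g : ℂ → ℂ) (p : ℕ) (hp : 1 ≤ p)
    (hh : DifferentiableOn ℂ h (ball (0:ℂ) 1))
    (hg : DifferentiableOn ℂ g (ball (0:ℂ) 1))
    (hg0 : g 0 = 0)
    (hsp : ∀ z ∈ ball (0:ℂ) 1, ‖deriv g z‖ < ‖deriv h z‖)
    (hmaps : ∀ z ∈ ball (0:ℂ) 1, ‖h z + (starRingEnd ℂ) (g z)‖ < 1)
    (hzero : ∀ k < p, iteratedDeriv k h 0 = 0 ∧ iteratedDeriv k g 0 = 0)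
    (horder : ‖iteratedDeriv p g 0‖ < ‖iteratedDeriv p h 0‖) :
    ∀ z ∈ ball (0:ℂ) 1,
      ‖h z + (starRingEnd ℂ) (g z)‖ ≤
        (4 / π) * Real.arctan ((‖z‖) ^ p *
          ((‖z‖ + (π / 4) *
              (‖iteratedDeriv p h 0‖ / (p.factorial : ℝ) +
               ‖iteratedDeriv p g 0‖ / (p.factorial : ℝ))) /
            (1 + (π / 4) *
              (‖iteratedDeriv p h 0‖ / (p.factorial : ℝ) +
               ‖iteratedDeriv p g 0‖ / (p.factorial : ℝ)) * ‖z‖))) :=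
  improved_harmonic_schwarz_general h g p hp hh hg hmaps hzero
end

section
/- Suppose f : 𝔻 → 𝔻 is analytic with f(0) = 0, and f extends complex-differentiably to z = α with |α| = 1 and f(α) = β, |β| = 1. Then Re(conj(β)·f'(α)·α) ≥ 1, and equality holds if and only if f(z) = (β/α)·z for all z. -/
open Complex Metric Real

/-!
On the radius through `α`, Schwarz's lemma gives `Re (conj β * f (t * α)) ≤ ‖f (t * α)‖ ≤ t` for
`0 < t < 1`, with equality at `t = 1`; comparing left derivatives at `t = 1` gives the inequality.

For the equality case write `f z = z * h z` with `h = dslope f 0`, so that `‖h‖ ≤ 1` on the disc.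
If `‖h‖` reaches `1` inside, `h` is constant by the maximum modulus principle. Otherwise `h` maps
the disc into itself with `‖h α‖ = 1`; the inequality applied to `B ∘ h`, where `B` is the disc
automorphism sending `h 0` to `0`, gives `0 < Re (conj (h α) * h' α * α)`, whereas this number is
`Re (conj β * f' α * α) - 1 = 0`.
-/

open Filter Topology Set ComplexConjugate

theorem HasDerivAt.le_of_eventuallyLE_nhdsLT {φ ψ : ℝ → ℝ} {φ' ψ' a : ℝ}
    (hφ : HasDerivAt φ φ' a) (hψ : HasDerivAt ψ ψ' a) (hle : φ ≤ᶠ[𝓝[<] a] ψ) (ha : φ a = ψ a) :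
    ψ' ≤ φ' := by
  have hslope := hasDerivAt_iff_tendsto_slope.1 (hψ.sub hφ)
  refine sub_nonpos.1 (le_of_tendsto (hslope.mono_left (nhdsLT_le_nhdsNE a)) ?_)
  filter_upwards [hle, self_mem_nhdsWithin] with t ht hta
  rw [slope_def_field, Pi.sub_apply, Pi.sub_apply, ha, sub_self, sub_zero]
  exact div_nonpos_of_nonneg_of_nonpos (sub_nonneg.2 ht) (sub_nonpos.2 hta.le)

theorem deriv_eq_of_eqOn_of_mem_closure {F : Type*} [NormedAddCommGroup F] [NormedSpace ℂ F]
    {f g : ℂ → F} {s : Set ℂ} {x : ℂ} (hfg : EqOn f g s) (hs : Convex ℝ s)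
    (hs' : (interior s).Nonempty) (hx : x ∈ closure s) (hf : DifferentiableAt ℂ f x)
    (hg : DifferentiableAt ℂ g x) : deriv f x = deriv g x := by
  have : (𝓝[s] x).NeBot := mem_closure_iff_nhdsWithin_neBot.1 hx
  have hval : f x = g x := tendsto_nhds_unique_of_eventuallyEq hf.continuousAt.continuousWithinAt
    hg.continuousAt.continuousWithinAt (hfg.eventuallyEq_of_mem self_mem_nhdsWithin)
  exact (uniqueDiffWithinAt_convex hs hs' hx).mono_field.eq_deriv s
    hf.hasDerivAt.hasDerivWithinAt (hg.hasDerivAt.hasDerivWithinAt.congr hfg hval)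

namespace Complex

noncomputable def blaschkeFactor (a z : ℂ) : ℂ := (z - a) / (1 - conj a * z)

section blaschkeFactor

variable {a z : ℂ}

@[simp]
theorem blaschkeFactor_self (a : ℂ) : blaschkeFactor a a = 0 := by
  simp [blaschkeFactor]

theorem one_sub_conj_mul_ne_zero (ha : ‖a‖ < 1) (hz : ‖z‖ ≤ 1) : 1 - conj a * z ≠ 0 := by
  refine sub_ne_zero.2 fun h => ?_
  have : ‖conj a * z‖ < 1 := by
    rw [norm_mul, norm_conj]
    nlinarith [norm_nonneg a, norm_nonneg z]
  rw [← h, norm_one] at this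
  exact this.false

theorem norm_blaschkeFactor_lt_one (ha : ‖a‖ < 1) (hz : ‖z‖ < 1) : ‖blaschkeFactor a z‖ < 1 := by
  have hden := one_sub_conj_mul_ne_zero ha hz.le
  have hnormSq : normSq (1 - conj a * z) - normSq (z - a) = (1 - normSq a) * (1 - normSq z) := by
    simp only [normSq_apply, sub_re, sub_im, mul_re, mul_im, conj_re, conj_im, one_re, one_im]
    ring
  have ha2 : normSq a < 1 := by
    rw [normSq_eq_norm_sq]; exact pow_lt_one₀ (norm_nonneg a) ha two_ne_zero
  have hz2 : normSq z < 1 := by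
    rw [normSq_eq_norm_sq]; exact pow_lt_one₀ (norm_nonneg z) hz two_ne_zero
  rw [blaschkeFactor, norm_div, div_lt_one (norm_pos_iff.2 hden), norm_def, norm_def]
  exact Real.sqrt_lt_sqrt (normSq_nonneg _) (by nlinarith)

theorem hasDerivAt_blaschkeFactor (h : 1 - conj a * z ≠ 0) :
    HasDerivAt (blaschkeFactor a) ((1 - normSq a) / (1 - conj a * z) ^ 2) z := by
  have hnum : HasDerivAt (fun w => w - a) 1 z := (hasDerivAt_id z).sub_const a
  have hden : HasDerivAt (fun w => 1 - conj a * w) (-conj a) z := by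
    simpa using ((hasDerivAt_id z).const_mul (conj a)).const_sub 1
  refine (hnum.div hden h).congr_deriv ?_
  rw [normSq_eq_conj_mul_self]
  field_simp
  ring

theorem one_sub_conj_mul_eq_mul_conj_sub (hz : ‖z‖ = 1) : 1 - conj a * z = z * conj (z - a) := by
  have hzconj : conj z * z = 1 := by rw [conj_mul', hz]; simp
  rw [map_sub]
  linear_combination -hzconj

theorem sub_ne_zero_of_norm_lt_of_norm_eq (ha : ‖a‖ < 1) (hz : ‖z‖ = 1) : z - a ≠ 0 :=
  sub_ne_zero.2 fun h => by rw [h] at hz; exact ha.ne hz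

theorem norm_blaschkeFactor_eq_one (ha : ‖a‖ < 1) (hz : ‖z‖ = 1) : ‖blaschkeFactor a z‖ = 1 := by
  rw [blaschkeFactor, one_sub_conj_mul_eq_mul_conj_sub hz, norm_div, norm_mul, norm_conj, hz,
    one_mul, div_self (norm_ne_zero_iff.2 (sub_ne_zero_of_norm_lt_of_norm_eq ha hz))]

theorem conj_blaschkeFactor_mul_deriv (ha : ‖a‖ < 1) (hz : ‖z‖ = 1) :
    conj (blaschkeFactor a z) * ((1 - normSq a) / (1 - conj a * z) ^ 2) =
      (((1 - normSq a) / normSq (z - a) : ℝ) : ℂ) * conj z := by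
  have hzconj : conj z * z = 1 := by rw [conj_mul', hz]; simp
  have hne := sub_ne_zero_of_norm_lt_of_norm_eq ha hz
  have hne' : conj (z - a) ≠ 0 := (map_ne_zero _).2 hne
  have hz0 : z ≠ 0 := norm_ne_zero_iff.1 (by rw [hz]; exact one_ne_zero)
  have hzc : conj z ≠ 0 := (map_ne_zero _).2 hz0
  rw [blaschkeFactor, map_div₀, one_sub_conj_mul_eq_mul_conj_sub hz, map_mul, conj_conj]
  simp only [ofReal_div, ofReal_sub, ofReal_one, normSq_eq_conj_mul_self]
  field_simp
  linear_combination (a * conj a - 1) * (1 + z * conj z) * hzconj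

end blaschkeFactor

theorem one_le_re_conj_mul_deriv_mul_of_mapsTo_ball {f : ℂ → ℂ} {α : ℂ}
    (hf : DifferentiableOn ℂ f (ball 0 1)) (hmaps : MapsTo f (ball 0 1) (ball 0 1))
    (hf0 : f 0 = 0) (hα : ‖α‖ = 1) (hfα : DifferentiableAt ℂ f α) (hfα1 : ‖f α‖ = 1) :
    1 ≤ (conj (f α) * deriv f α * α).re := by
  have hradial : HasDerivAt (fun t : ℝ => (conj (f α) * f (t * α)).re)
      (conj (f α) * deriv f α * α).re 1 := by
    have hline : HasDerivAt (fun z : ℂ => z * α) α ((1 : ℝ) : ℂ) := by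
      simpa using (hasDerivAt_id ((1 : ℝ) : ℂ)).mul_const α
    have hcomp := ((by simpa using hfα.hasDerivAt :
      HasDerivAt f (deriv f α) (((1 : ℝ) : ℂ) * α)).comp ((1 : ℝ) : ℂ) hline).const_mul (conj (f α))
    simpa [Function.comp_def, mul_comm α, mul_assoc] using hcomp.real_of_complex
  refine hradial.le_of_eventuallyLE_nhdsLT (hasDerivAt_id 1) ?_ ?_
  · filter_upwards [Ioo_mem_nhdsLT zero_lt_one] with t ht
    have hnorm : ‖(t : ℂ) * α‖ = t := by simp [hα, abs_of_pos ht.1]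
    have hlt : ‖(t : ℂ) * α‖ < 1 := by rw [hnorm]; exact ht.2
    calc (conj (f α) * f (t * α)).re ≤ ‖conj (f α) * f (t * α)‖ := re_le_norm _
      _ = ‖f (t * α)‖ := by rw [norm_mul, norm_conj, hfα1, one_mul]
      _ ≤ ‖(t : ℂ) * α‖ :=
        norm_le_norm_of_mapsTo_ball hf (hmaps.mono_right ball_subset_closedBall) hf0 hlt
      _ = t := hnorm
  · simp [mul_comm (conj _), mul_conj, normSq_eq_norm_sq, hfα1]

theorem re_conj_mul_deriv_mul_pos_of_mapsTo_ball {f : ℂ → ℂ} {α : ℂ}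
    (hf : DifferentiableOn ℂ f (ball 0 1)) (hmaps : MapsTo f (ball 0 1) (ball 0 1))
    (hα : ‖α‖ = 1) (hfα : DifferentiableAt ℂ f α) (hfα1 : ‖f α‖ = 1) :
    0 < (conj (f α) * deriv f α * α).re := by
  set a := f 0
  have ha : ‖a‖ < 1 := mem_ball_zero_iff.1 (hmaps (mem_ball_self one_pos))
  have ha2 : normSq a < 1 := by
    rw [normSq_eq_norm_sq]; exact pow_lt_one₀ (norm_nonneg a) ha two_ne_zero
  have hB : ∀ {w : ℂ}, ‖w‖ ≤ 1 → HasDerivAt (blaschkeFactor a)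
      ((1 - normSq a) / (1 - conj a * w) ^ 2) w :=
    fun hw => hasDerivAt_blaschkeFactor (one_sub_conj_mul_ne_zero ha hw)
  have hG : DifferentiableOn ℂ (blaschkeFactor a ∘ f) (ball 0 1) := fun z hz =>
    ((hB (mem_ball_zero_iff.1 (hmaps hz)).le).differentiableAt.comp z
      (hf.differentiableAt (isOpen_ball.mem_nhds hz))).differentiableWithinAt
  have hGmaps : MapsTo (blaschkeFactor a ∘ f) (ball 0 1) (ball 0 1) := fun z hz =>
    mem_ball_zero_iff.2 (norm_blaschkeFactor_lt_one ha (mem_ball_zero_iff.1 (hmaps hz)))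
  have hGα := (hB hfα1.le).comp α hfα.hasDerivAt
  have hbound := one_le_re_conj_mul_deriv_mul_of_mapsTo_ball hG hGmaps (blaschkeFactor_self a)
    hα hGα.differentiableAt (norm_blaschkeFactor_eq_one ha hfα1)
  have hscale : conj ((blaschkeFactor a ∘ f) α) * deriv (blaschkeFactor a ∘ f) α * α =
      (((1 - normSq a) / normSq (f α - a) : ℝ) : ℂ) * (conj (f α) * deriv f α * α) := by
    rw [hGα.deriv, Function.comp_apply, ← mul_assoc, conj_blaschkeFactor_mul_deriv ha hfα1]
    ring
  rw [hscale, re_ofReal_mul] at hbound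
  exact pos_of_mul_pos_right (one_pos.trans_le hbound)
    (div_nonneg (sub_nonneg.2 ha2.le) (normSq_nonneg _))

theorem mem_closure_ball_of_norm_eq_one {α : ℂ} (hα : ‖α‖ = 1) : α ∈ closure (ball (0 : ℂ) 1) := by
  rw [closure_ball 0 one_ne_zero, mem_closedBall_zero_iff, hα]

theorem conj_mul_deriv_mul_of_eventuallyEq_div {f h : ℂ → ℂ} {α : ℂ} (hα : ‖α‖ = 1)
    (hfα : DifferentiableAt ℂ f α) (hfα1 : ‖f α‖ = 1) (hh : h =ᶠ[𝓝 α] fun z => f z / z) :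
    conj (h α) * deriv h α * α = conj (f α) * deriv f α * α - 1 := by
  have hα0 : α ≠ 0 := norm_ne_zero_iff.1 (by rw [hα]; exact one_ne_zero)
  have hconjα : conj α = α⁻¹ := by rw [inv_def, normSq_eq_norm_sq, hα]; simp
  have hfα_conj : conj (f α) * f α = 1 := by rw [conj_mul', hfα1]; simp
  have hquot : HasDerivAt (fun z => f z / z) ((deriv f α * α - f α * 1) / α ^ 2) α :=
    hfα.hasDerivAt.div (hasDerivAt_id' α) hα0
  rw [hh.deriv_eq, hquot.deriv, hh.eq_of_nhds, map_div₀, hconjα]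
  field_simp
  linear_combination -hfα_conj

theorem eqOn_mul_of_re_conj_mul_deriv_mul_eq_one {f : ℂ → ℂ} {α : ℂ}
    (hf : DifferentiableOn ℂ f (ball 0 1)) (hmaps : MapsTo f (ball 0 1) (ball 0 1))
    (hf0 : f 0 = 0) (hα : ‖α‖ = 1) (hfα : DifferentiableAt ℂ f α) (hfα1 : ‖f α‖ = 1)
    (heq : (conj (f α) * deriv f α * α).re = 1) :
    EqOn f (fun z => f α / α * z) (ball 0 1) := by
  set h := dslope f 0
  have hα0 : α ≠ 0 := norm_ne_zero_iff.1 (by rw [hα]; exact one_ne_zero)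
  have hfh : ∀ z, f z = z * h z := fun z => by
    simpa [hf0] using (sub_smul_dslope f 0 z).symm
  have hh : DifferentiableOn ℂ h (ball 0 1) :=
    (differentiableOn_dslope (isOpen_ball.mem_nhds (mem_ball_self one_pos))).2 hf
  have hh_le : ∀ z ∈ ball (0 : ℂ) 1, ‖h z‖ ≤ 1 := fun z hz => by
    simpa using norm_dslope_le_div_of_mapsTo_ball hf
      (by rw [hf0]; exact hmaps.mono_right ball_subset_closedBall) hz
  have hh_near : h =ᶠ[𝓝 α] fun z => f z / z := by
    filter_upwards [isOpen_ne.mem_nhds hα0] with z hz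
    rw [hfh z, mul_div_cancel_left₀ _ hz]
  have hhα : DifferentiableAt ℂ h α :=
    (hfα.div differentiableAt_id hα0).congr_of_eventuallyEq hh_near
  have hhα_val : h α = f α / α := hh_near.eq_of_nhds
  by_cases hint : ∃ z₀ ∈ ball (0 : ℂ) 1, ‖h z₀‖ = 1
  · obtain ⟨z₀, hz₀, hz₀1⟩ := hint
    have hconst : ∀ z ∈ ball (0 : ℂ) 1, h z = h z₀ := fun z hz =>
      eqOn_of_isPreconnected_of_isMaxOn_norm (convex_ball 0 1).isPreconnected isOpen_ball hh hz₀
        (fun w hw => by simpa [hz₀1] using hh_le w hw) hz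
    have hhα_const : h α = h z₀ := hhα.continuousAt.continuousWithinAt.eq_const_of_mem_closure
      (mem_closure_ball_of_norm_eq_one hα) hconst
    intro z hz
    rw [hfh z, hconst z hz, ← hhα_const, hhα_val, mul_comm]
  · push Not at hint
    have hhmaps : MapsTo h (ball 0 1) (ball 0 1) := fun z hz =>
      mem_ball_zero_iff.2 ((hh_le z hz).lt_of_ne (hint z hz))
    have hpos := re_conj_mul_deriv_mul_pos_of_mapsTo_ball hh hhmaps hα hhα
      (by rw [hhα_val, norm_div, hfα1, hα, div_one])
    rw [conj_mul_deriv_mul_of_eventuallyEq_div hα hfα hfα1 hh_near, sub_re, heq, one_re,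
      sub_self] at hpos
    exact absurd hpos (lt_irrefl 0)

end Complex

theorem boundary_schwarz_analytic
    (f : ℂ → ℂ)
    (hf : DifferentiableOn ℂ f (ball (0:ℂ) 1))
    (hmaps : ∀ z ∈ ball (0:ℂ) 1, f z ∈ ball (0:ℂ) 1)
    (hf0 : f 0 = 0)
    (α β : ℂ) (hα : ‖α‖ = 1) (hβ : ‖β‖ = 1)
    (hfα : AnalyticAt ℂ f α) (hfval : f α = β) :
    1 ≤ ((starRingEnd ℂ) β * deriv f α * α).re ∧
      (((starRingEnd ℂ) β * deriv f α * α).re = 1 ↔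
        Set.EqOn f (fun z => (β / α) * z) (ball (0:ℂ) 1)) := by
  subst hfval
  have hfα' := hfα.differentiableAt
  refine ⟨one_le_re_conj_mul_deriv_mul_of_mapsTo_ball hf hmaps hf0 hα hfα' hβ,
    eqOn_mul_of_re_conj_mul_deriv_mul_eq_one hf hmaps hf0 hα hfα' hβ, fun hlin => ?_⟩
  have hα0 : α ≠ 0 := norm_ne_zero_iff.1 (by rw [hα]; exact one_ne_zero)
  have hderiv : deriv f α = f α / α := by
    rw [deriv_eq_of_eqOn_of_mem_closure hlin (convex_ball 0 1)
      (by rw [isOpen_ball.interior_eq]; exact ⟨0, mem_ball_self one_pos⟩)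
      (mem_closure_ball_of_norm_eq_one hα) hfα' (differentiableAt_id.const_mul _)]
    simp
  rw [hderiv, mul_assoc, div_mul_cancel₀ _ hα0, conj_mul', hβ]
  simp
end
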